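/- arXiv:1811.06431 — 3 statements merged into one kernel-verified Lean document; each statement's English description precedes it below -/
import Mathlib

section
/- Suppose there exists a subsystem i ∈ 𝒮 whose (i,𝒮,𝒞)-weakly superior set is nonempty, i.e., there exists a system valid x such that no system valid x̄ satisfies f i x̄ ≨ f i x. Then the (𝒮,𝒮,𝒞)-weakly superior set is nonempty, i.e., there exists a system valid x such that no system valid x̄ satisfies f j x̄ ≨ f j x for all j ∈ 𝒮. -/
/-- The system valid set: points feasible for all subsystems and all linking constraints. -/
def systemValid {n m k : ℕ} (X : Fin m → Set (Fin n → ℝ))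
    (L : Fin k → Set (Fin n → ℝ)) : Set (Fin n → ℝ) :=
  {x | (∀ i, x ∈ X i) ∧ (∀ j, x ∈ L j)}

/-- If there is a subsystem `i` whose `(i,𝒮,𝒞)`-weakly superior set is nonempty,
then the `(𝒮,𝒮,𝒞)`-weakly superior set is nonempty. -/
theorem exists_weaklySuperior_of_exists_subsystem {n m k : ℕ} (p : Fin m → ℕ)
    (f : ∀ i : Fin m, (Fin n → ℝ) → Fin (p i) → ℝ)
    (X : Fin m → Set (Fin n → ℝ)) (L : Fin k → Set (Fin n → ℝ))
    (h : ∃ i : Fin m, ∃ x ∈ systemValid X L,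
      ¬ ∃ y ∈ systemValid X L, f i y ≤ f i x ∧ f i y ≠ f i x) :
    ∃ x ∈ systemValid X L,
      ¬ ∃ y ∈ systemValid X L, ∀ j, f j y ≤ f j x ∧ f j y ≠ f j x := by
  obtain ⟨i, x, hx, hx_undominated⟩ := h
  exact ⟨x, hx, fun ⟨y, hy, hy_dominates⟩ => hx_undominated ⟨y, hy, hy_dominates i⟩⟩
end

section
/- (Correctness of the hierarchical algorithm with all feasibility and consistency constraints.) Let X ⊆ ℝ^n be the system valid set and define recursively Y_1 := Eff(f_1, X) and Y_i := Eff(f_i, Y_{i-1}) for i = 2,…,m, where Eff(g, Z) := {x ∈ Z | ¬∃ x̄ ∈ Z, g(x̄) ≨ g(x)}. Then Y_m is contained in the (𝒮,𝒮,𝒞)-superior set: every x ∈ Y_m satisfies x ∈ X and there is no x̄ ∈ X with f_i(x̄) ≦ f_i(x) for all i = 1,…,m and f_j(x̄) ≨ f_j(x) for some j. -/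
/-!
Membership in `Y_m` forces membership in every earlier level, in particular in `X`.
If `y ∈ X` were weakly better than `x` in every objective, an induction along the levels shows
that `y` ties `x` at each level: `x` is efficient over the previous level, which contains `y`,
so `f_i y ≤ f_i x` forces equality, and a point with the same image as an efficient point is
itself efficient, so `y` passes to the next level. Hence no objective can improve strictly.
-/

def Eff {n p : ℕ} (g : (Fin n → ℝ) → Fin p → ℝ) (Z : Set (Fin n → ℝ)) :
    Set (Fin n → ℝ) :=
  {x ∈ Z | ¬ ∃ y ∈ Z, g y ≤ g x ∧ g y ≠ g x}

section Eff

variable {n p : ℕ} {g : (Fin n → ℝ) → Fin p → ℝ} {Z : Set (Fin n → ℝ)} {x y : Fin n → ℝ}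

theorem Eff_subset : Eff g Z ⊆ Z := fun _ hx => hx.1

theorem eq_of_mem_Eff_of_le (hx : x ∈ Eff g Z) (hy : y ∈ Z) (hle : g y ≤ g x) : g y = g x :=
  by_contra fun hne => hx.2 ⟨y, hy, hle, hne⟩

theorem mem_Eff_of_eq (hx : x ∈ Eff g Z) (hy : y ∈ Z) (heq : g y = g x) : y ∈ Eff g Z :=
  ⟨hy, by rw [heq]; exact hx.2⟩

end Eff

section EffChain

variable {n m : ℕ} {p : ℕ → ℕ} {f : ∀ i, (Fin n → ℝ) → Fin (p i) → ℝ}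
  {S : ℕ → Set (Fin n → ℝ)} {x y : Fin n → ℝ}

theorem mem_of_mem_effChain (hS : ∀ i < m, S (i + 1) = Eff (f (i + 1)) (S i))
    (hx : x ∈ S m) {i : ℕ} (hi : i ≤ m) : x ∈ S i :=
  Nat.decreasingInduction (motive := fun i _ => x ∈ S i)
    (fun k hk hx => Eff_subset (hS k hk ▸ hx)) hx hi

theorem mem_effChain_of_le (hS : ∀ i < m, S (i + 1) = Eff (f (i + 1)) (S i))
    (hx : x ∈ S m) (hy : y ∈ S 0) (hle : ∀ i < m, f (i + 1) y ≤ f (i + 1) x) :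
    ∀ i ≤ m, y ∈ S i := by
  intro i hi
  induction i with
  | zero => exact hy
  | succ k ih =>
    have hxk : x ∈ Eff (f (k + 1)) (S k) := hS k hi ▸ mem_of_mem_effChain hS hx hi
    have hyk : y ∈ S k := ih (by omega)
    rw [hS k hi]
    exact mem_Eff_of_eq hxk hyk (eq_of_mem_Eff_of_le hxk hyk (hle k hi))

theorem effChain_apply_eq_of_le (hS : ∀ i < m, S (i + 1) = Eff (f (i + 1)) (S i))
    (hx : x ∈ S m) (hy : y ∈ S 0) (hle : ∀ i < m, f (i + 1) y ≤ f (i + 1) x) :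
    ∀ i < m, f (i + 1) y = f (i + 1) x := fun i hi =>
  eq_of_mem_Eff_of_le (hS i hi ▸ mem_of_mem_effChain hS hx hi)
    (mem_effChain_of_le hS hx hy hle i hi.le) (hle i hi)

end EffChain

/-- Correctness of the hierarchical algorithm with all feasibility and consistency
constraints: with `Y_1 = Eff(f_1, X)` and `Y_i = Eff(f_i, Y_{i-1})` for `i = 2,…,m`
over the system valid set `X`, every point of `Y_m` is `(𝒮,𝒮,𝒞)`-superior, i.e.
system valid and not dominated (in the superiority sense) by any system valid point. -/
theorem hierarchical_algorithm_correct (n m : ℕ) (hm : 1 ≤ m) (p : ℕ → ℕ)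
    (f : ∀ i : ℕ, (Fin n → ℝ) → Fin (p i) → ℝ)
    (X : Set (Fin n → ℝ)) (Y : ℕ → Set (Fin n → ℝ))
    (hY1 : Y 1 = Eff (f 1) X)
    (hYstep : ∀ i : ℕ, 1 ≤ i → i < m → Y (i + 1) = Eff (f (i + 1)) (Y i)) :
    ∀ x ∈ Y m, x ∈ X ∧
      ¬ ∃ y ∈ X, (∀ i, 1 ≤ i → i ≤ m → f i y ≤ f i x) ∧
        ∃ j, 1 ≤ j ∧ j ≤ m ∧ f j y ≤ f j x ∧ f j y ≠ f j x := by
  -- `X` is placed as level `0` in front of the chain `Y`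
  set S : ℕ → Set (Fin n → ℝ) := fun i => if i = 0 then X else Y i
  have hS : ∀ i < m, S (i + 1) = Eff (f (i + 1)) (S i) := by
    rintro (_ | i) hi
    · simpa [S] using hY1
    · simpa [S] using hYstep (i + 1) (by omega) hi
  intro x hx
  have hxS : x ∈ S m := by simpa [S, Nat.pos_iff_ne_zero.mp hm] using hx
  refine ⟨by simpa [S] using mem_of_mem_effChain hS hxS (Nat.zero_le m), ?_⟩
  rintro ⟨y, hy, hle, j, hj1, hjm, -, hne⟩
  obtain ⟨k, rfl⟩ : ∃ k, j = k + 1 := ⟨j - 1, by omega⟩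
  exact hne (effChain_apply_eq_of_le hS hxS (by simpa [S] using hy)
    (fun i hi => hle (i + 1) (by omega) (by omega)) k (by omega))
end

section
/- (Correctness of the hierarchical algorithm with step-by-step inclusion of feasibility and consistency.) Let Z_1,…,Z_m ⊆ ℝ^n be sets whose intersection is the system valid set, X = Z_1 ∩ ⋯ ∩ Z_m (in the complex system, Z_i is the set of points that are feasible for subsystem i and consistent with the linking constraints C_i joining subsystem i to earlier subsystems). Define recursively Y_1 := Eff(f_1, Z_1) and Y_i := Eff(f_i, Z_i ∩ Y_{i-1}) for i = 2,…,m, where Eff(g, Z) := {x ∈ Z | ¬∃ x̄ ∈ Z, g(x̄) ≨ g(x)}. Then Y_m is contained in the (𝒮,𝒮,𝒞)-superior set: every x ∈ Y_m satisfies x ∈ X and there is no x̄ ∈ X with f_i(x̄) ≦ f_i(x) for all i = 1,…,m and f_j(x̄) ≨ f_j(x) for some j. -/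
section Hierarchy

variable {n m : ℕ} {p : ℕ → ℕ} {f : ∀ i : ℕ, (Fin n → ℝ) → Fin (p i) → ℝ}
  {Z Y : ℕ → Set (Fin n → ℝ)}

theorem mem_Z_of_mem_Y (hY1 : Y 1 = Eff (f 1) (Z 1))
    (hYstep : ∀ i : ℕ, 1 ≤ i → i < m → Y (i + 1) = Eff (f (i + 1)) (Z (i + 1) ∩ Y i))
    {k : ℕ} (hk : 1 ≤ k) (hkm : k ≤ m) {x : Fin n → ℝ} (hx : x ∈ Y k) :
    ∀ i, 1 ≤ i → i ≤ k → x ∈ Z i := by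
  induction k, hk using Nat.le_induction generalizing x with
  | base =>
    intro i hi1 hi
    obtain rfl : i = 1 := by omega
    exact Eff_subset (hY1 ▸ hx)
  | succ k hk ih =>
    rw [hYstep k hk (by omega)] at hx
    obtain ⟨hxZ, hxY⟩ := Eff_subset hx
    intro i hi1 hi
    rcases Nat.lt_or_eq_of_le hi with hi | rfl
    · exact ih (by omega) hxY i hi1 (by omega)
    · exact hxZ

theorem mem_Y_and_eq_of_le (hY1 : Y 1 = Eff (f 1) (Z 1))
    (hYstep : ∀ i : ℕ, 1 ≤ i → i < m → Y (i + 1) = Eff (f (i + 1)) (Z (i + 1) ∩ Y i))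
    {k : ℕ} (hk : 1 ≤ k) (hkm : k ≤ m) {x y : Fin n → ℝ} (hx : x ∈ Y k)
    (hy : ∀ i, 1 ≤ i → i ≤ k → y ∈ Z i ∧ f i y ≤ f i x) :
    y ∈ Y k ∧ ∀ i, 1 ≤ i → i ≤ k → f i y = f i x := by
  induction k, hk using Nat.le_induction generalizing x with
  | base =>
    rw [hY1] at hx ⊢
    obtain ⟨hyZ, hle⟩ := hy 1 le_rfl le_rfl
    have heq := eq_of_mem_Eff_of_le hx hyZ hle
    refine ⟨mem_Eff_of_eq hx hyZ heq, fun i hi1 hi => ?_⟩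
    obtain rfl : i = 1 := by omega
    exact heq
  | succ k hk ih =>
    rw [hYstep k hk (by omega)] at hx ⊢
    obtain ⟨hyYk, hprev⟩ :=
      ih (by omega) (Eff_subset hx).2 fun i hi1 hi => hy i hi1 (by omega)
    obtain ⟨hyZ, hle⟩ := hy (k + 1) (by omega) le_rfl
    have heq := eq_of_mem_Eff_of_le hx ⟨hyZ, hyYk⟩ hle
    refine ⟨mem_Eff_of_eq hx ⟨hyZ, hyYk⟩ heq, fun i hi1 hi => ?_⟩
    rcases Nat.lt_or_eq_of_le hi with hi | rfl
    · exact hprev i hi1 (by omega)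
    · exact heq

end Hierarchy

/-- Correctness of the hierarchical algorithm with step-by-step inclusion of
feasibility and consistency: with sets `Z_1,…,Z_m` whose intersection is the system
valid set `X`, `Y_1 = Eff(f_1, Z_1)` and `Y_i = Eff(f_i, Z_i ∩ Y_{i-1})` for
`i = 2,…,m`, every point of `Y_m` is `(𝒮,𝒮,𝒞)`-superior, i.e. system valid and not
dominated (in the superiority sense) by any system valid point. -/
theorem hierarchical_stepwise_algorithm_correct (n m : ℕ) (hm : 1 ≤ m) (p : ℕ → ℕ)
    (f : ∀ i : ℕ, (Fin n → ℝ) → Fin (p i) → ℝ)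
    (Z : ℕ → Set (Fin n → ℝ)) (X : Set (Fin n → ℝ))
    (hX : X = {x | ∀ i, 1 ≤ i → i ≤ m → x ∈ Z i})
    (Y : ℕ → Set (Fin n → ℝ))
    (hY1 : Y 1 = Eff (f 1) (Z 1))
    (hYstep : ∀ i : ℕ, 1 ≤ i → i < m → Y (i + 1) = Eff (f (i + 1)) (Z (i + 1) ∩ Y i)) :
    ∀ x ∈ Y m, x ∈ X ∧
      ¬ ∃ y ∈ X, (∀ i, 1 ≤ i → i ≤ m → f i y ≤ f i x) ∧
        ∃ j, 1 ≤ j ∧ j ≤ m ∧ f j y ≤ f j x ∧ f j y ≠ f j x := by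
  subst hX
  intro x hx
  refine ⟨mem_Z_of_mem_Y hY1 hYstep hm le_rfl hx, ?_⟩
  rintro ⟨y, hyX, hle, j, hj1, hjm, -, hne⟩
  exact hne ((mem_Y_and_eq_of_le hY1 hYstep hm le_rfl hx fun i hi1 hi =>
    ⟨hyX i hi1 hi, hle i hi1 hi⟩).2 j hj1 hjm)
end
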